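/- arXiv:2409.01356 — 2 statements merged into one kernel-verified Lean document; each statement's English description precedes it below -/
import Mathlib

section
/- Let d_1 be an even positive integer and let v_1^{(1)}, v_1^{(2)}, ..., v_m^{(1)}, v_m^{(2)} be 2m generic vectors in ℝ^{m+1}. Then the system of m equations (v_j^{(1)}·x)^{d_1} + (v_j^{(2)}·x)^{d_1} = 0, j = 1,...,m, has no real solution x ∈ P^m_ℝ, but has exactly d_1^m distinct complex solutions in P^m_ℂ. -/
/-!
Over an algebraically closed field `x ^ d + y ^ d = 0` holds iff `x = ζ * y` for some `ζ` with
`ζ ^ d = -1`. Hence a point solves the system iff, for some tuple `ζ` of `d`-th roots of `-1`, it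
lies on the `m` hyperplanes `(v_j^{(1)} - ζ_j v_j^{(2)}) ⬝ x = 0`. Genericity is the condition
that, for every such `ζ` and every `j`, these `m` twisted forms together with `v_j^{(2)}` are
linearly independent: a determinant condition which holds at one explicit tuple, hence on a dense
open set. Under it each twisted system cuts out exactly one projective point, and two tuples with
`ζ_j ≠ ζ'_j` give different points, since a common point would also kill `v_j^{(2)}`. This gives
`d ^ m` complex solutions. For even `d` a real solution would be a common zero of all `2m` forms,
which the same condition excludes.
-/

open Polynomial Matrix Module Filter Topology
open scoped LinearAlgebra.Projectivization

theorem Projectivization.setOf_rep_mem_eq_singleton {K V : Type*} [DivisionRing K]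
    [AddCommGroup V] [Module K V] (W : Submodule K V) (hW : finrank K W = 1) :
    {x : ℙ K V | x.rep ∈ W} = {mk'' W hW} := by
  have : FiniteDimensional K W := .of_finrank_pos (by omega)
  ext x
  refine ⟨fun hx => ?_, fun hx => ?_⟩
  · have hle : x.submodule ≤ W := by
      rwa [x.submodule_eq, Submodule.span_singleton_le_iff_mem]
    rw [Set.mem_singleton_iff, ← x.mk''_submodule]
    congr 1
    exact Submodule.eq_of_le_of_finrank_eq hle (by rw [x.finrank_submodule, hW])
  · obtain rfl := Set.mem_singleton_iff.mp hx
    exact (submodule_mk'' W hW).le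
      (by rw [submodule_eq]; exact Submodule.mem_span_singleton_self _)

theorem pow_add_pow_eq_zero_iff_exists_eq_mul {K : Type*} [Field K] [IsAlgClosed K] {d : ℕ}
    (hd : d ≠ 0) (x y : K) : x ^ d + y ^ d = 0 ↔ ∃ z, z ^ d = -1 ∧ x = z * y := by
  refine ⟨fun h => ?_, fun ⟨z, hz, hxy⟩ => by rw [hxy, mul_pow, hz]; ring⟩
  by_cases hy : y = 0
  · obtain ⟨z, hz⟩ := IsAlgClosed.exists_pow_nat_eq (-1 : K) (Nat.pos_of_ne_zero hd)
    subst hy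
    exact ⟨z, hz, by simpa [hd] using h⟩
  · refine ⟨x / y, ?_, by field_simp⟩
    rw [div_pow, eq_neg_of_add_eq_zero_left h, neg_div, div_self (pow_ne_zero d hy)]

theorem IsPrimitiveRoot.card_nthRootsFinset_of_exists_pow_eq {R : Type*} [CommRing R] [IsDomain R]
    {ζ a : R} {n : ℕ} (hζ : IsPrimitiveRoot ζ n) (ha : a ≠ 0) (hex : ∃ α, α ^ n = a) :
    (nthRootsFinset n a).card = n := by
  classical
  rw [nthRootsFinset_def, Multiset.toFinset_card_of_nodup (hζ.nthRoots_nodup ha),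
    hζ.card_nthRoots, if_pos hex]

theorem isOpen_setOf_det_ne_zero {𝕜 V n : Type*} [NormedField 𝕜] [NormedAlgebra ℝ 𝕜]
    [CompleteSpace 𝕜] [NormedAddCommGroup V] [NormedSpace ℝ V] [FiniteDimensional ℝ V]
    [Fintype n] [DecidableEq n] (A : V →ₗ[ℝ] Matrix n n 𝕜) :
    IsOpen {v | (A v).det ≠ 0} :=
  isOpen_ne_fun A.continuous_of_finiteDimensional.matrix_det continuous_const

theorem dense_setOf_det_ne_zero {𝕜 V n : Type*} [NormedField 𝕜] [NormedAlgebra ℝ 𝕜]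
    [NormedAddCommGroup V] [NormedSpace ℝ V] [Fintype n] [DecidableEq n]
    (A : V →ₗ[ℝ] Matrix n n 𝕜) {w : V} (hw : (A w).det ≠ 0) :
    Dense {v | (A v).det ≠ 0} := by
  -- along the line from `v` to `w` the determinant is a polynomial, nonzero at `w`
  intro v
  set line : ℝ → V := fun t => v + t • (w - v)
  set p : 𝕜[X] := det ((A v).map C + (X : 𝕜[X]) • (A w - A v).map C)
  have hp : ∀ t : ℝ, p.eval (algebraMap ℝ 𝕜 t) = (A (line t)).det := by
    intro t
    rw [← coe_evalRingHom, RingHom.map_det]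
    congr 1
    ext i j
    simp [line, ← Algebra.smul_def]
  have hp0 : p ≠ 0 := fun h => hw (by simpa [h, line] using (hp 1).symm)
  have hroots : {t : ℝ | p.eval (algebraMap ℝ 𝕜 t) = 0}.Finite :=
    (p.finite_setOfPred_isRoot hp0).preimage (algebraMap ℝ 𝕜).injective.injOn
  refine mem_closure_of_tendsto (f := line) (b := 𝓝[≠] 0) ?_ ?_
  · have : Continuous line := by fun_prop
    simpa [line] using (this.tendsto 0).mono_left nhdsWithin_le_nhds
  · filter_upwards [nhdsNE_le_cofinite (0 : ℝ) hroots.compl_mem_cofinite] with t ht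
    simpa [← hp] using ht

section TwistedSystem

variable {K : Type*} [Field K] {m : ℕ} (a b : Fin m → Fin (m + 1) → K) (ζ : Fin m → K)

def twistedRows : Matrix (Fin m) (Fin (m + 1)) K :=
  Matrix.of fun j => a j - ζ j • b j

def twistedMatrix (j : Fin m) : Matrix (Fin (m + 1)) (Fin (m + 1)) K :=
  Matrix.of (Fin.snoc (twistedRows a b ζ) (b j))

variable {a b ζ}

theorem twistedRows_mulVec_eq_zero_iff {x : Fin (m + 1) → K} :
    twistedRows a b ζ *ᵥ x = 0 ↔ ∀ j, a j ⬝ᵥ x = ζ j * b j ⬝ᵥ x := by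
  simp only [funext_iff, mulVec, twistedRows, Matrix.of_apply, sub_dotProduct, smul_dotProduct,
    smul_eq_mul, Pi.zero_apply, sub_eq_zero]

@[simp]
theorem twistedMatrix_castSucc (j : Fin m) (i : Fin m) :
    twistedMatrix a b ζ j i.castSucc = twistedRows a b ζ i :=
  Fin.snoc_castSucc (α := fun _ => Fin (m + 1) → K) ..

@[simp]
theorem twistedMatrix_last (j : Fin m) : twistedMatrix a b ζ j (Fin.last m) = b j :=
  Fin.snoc_last (α := fun _ => Fin (m + 1) → K) ..

theorem twistedMatrix_mulVec_eq_zero_iff {j : Fin m} {x : Fin (m + 1) → K} :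
    twistedMatrix a b ζ j *ᵥ x = 0 ↔ twistedRows a b ζ *ᵥ x = 0 ∧ b j ⬝ᵥ x = 0 := by
  rw [funext_iff, Fin.forall_fin_succ', funext_iff]
  simp [mulVec]

theorem det_twistedMatrix_ne_zero_iff {j : Fin m} :
    (twistedMatrix a b ζ j).det ≠ 0 ↔
      ∀ x, twistedRows a b ζ *ᵥ x = 0 → b j ⬝ᵥ x = 0 → x = 0 := by
  rw [ne_eq, ← exists_mulVec_eq_zero_iff]
  simp only [twistedMatrix_mulVec_eq_zero_iff]
  grind

theorem finrank_ker_twistedRows {j : Fin m} (h : (twistedMatrix a b ζ j).det ≠ 0) :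
    finrank K (LinearMap.ker (twistedRows a b ζ).mulVecLin) = 1 := by
  set N := LinearMap.ker (twistedRows a b ζ).mulVecLin
  have hpos : 1 ≤ finrank K N :=
    Submodule.one_le_finrank_iff.mpr (LinearMap.ker_ne_bot_of_finrank_lt (by simp))
  have hle : finrank K N ≤ finrank K K :=
    LinearMap.finrank_le_finrank_of_injective (f := dotProductBilin K K (b j) ∘ₗ N.subtype)
      ((injective_iff_map_eq_zero _).mpr fun x hx =>
        Subtype.ext (det_twistedMatrix_ne_zero_iff.mp h x (LinearMap.mem_ker.mp x.2) hx))
  rw [finrank_self] at hle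
  omega

theorem eq_zero_of_twistedRows_mulVec_eq_zero {ζ' : Fin m → K} {j : Fin m}
    (h : (twistedMatrix a b ζ j).det ≠ 0) (hj : ζ j ≠ ζ' j) {x : Fin (m + 1) → K}
    (hx : twistedRows a b ζ *ᵥ x = 0) (hx' : twistedRows a b ζ' *ᵥ x = 0) : x = 0 := by
  refine det_twistedMatrix_ne_zero_iff.mp h x hx ?_
  rw [twistedRows_mulVec_eq_zero_iff] at hx hx'
  have : (ζ j - ζ' j) * b j ⬝ᵥ x = 0 := by linear_combination hx' j - hx j
  exact (mul_eq_zero.mp this).resolve_left (sub_ne_zero.mpr hj)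

variable (K m) in
noncomputable def rootTuples (d : ℕ) : Finset (Fin m → K) :=
  Fintype.piFinset fun _ => nthRootsFinset d (-1 : K)

variable [IsAlgClosed K] {d : ℕ}

theorem forall_pow_add_pow_eq_zero_iff (hd : d ≠ 0) {x : Fin (m + 1) → K} :
    (∀ j, (a j ⬝ᵥ x) ^ d + (b j ⬝ᵥ x) ^ d = 0) ↔
      ∃ ζ ∈ rootTuples K m d, twistedRows a b ζ *ᵥ x = 0 := by
  simp only [pow_add_pow_eq_zero_iff_exists_eq_mul hd, Classical.skolem, forall_and,
    twistedRows_mulVec_eq_zero_iff, rootTuples, Fintype.mem_piFinset,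
    mem_nthRootsFinset (Nat.pos_of_ne_zero hd)]

theorem encard_setOf_pow_add_pow_eq_zero (hm : 0 < m) (hd : d ≠ 0)
    (hgen : ∀ ζ ∈ rootTuples K m d, ∀ j, (twistedMatrix a b ζ j).det ≠ 0) :
    {x : ℙ K (Fin (m + 1) → K) | ∀ j, (a j ⬝ᵥ x.rep) ^ d + (b j ⬝ᵥ x.rep) ^ d = 0}.encard =
      (rootTuples K m d).card := by
  set line := fun ζ => LinearMap.ker (twistedRows a b ζ).mulVecLin
  have hsol : {x : ℙ K (Fin (m + 1) → K) | ∀ j, (a j ⬝ᵥ x.rep) ^ d + (b j ⬝ᵥ x.rep) ^ d = 0} =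
      ⋃ ζ ∈ (rootTuples K m d : Set (Fin m → K)), {x | x.rep ∈ line ζ} := by
    ext x
    simp [line, forall_pow_add_pow_eq_zero_iff hd]
  have hpoint : ∀ ζ ∈ rootTuples K m d, {x : ℙ K (Fin (m + 1) → K) | x.rep ∈ line ζ}.encard = 1 :=
    fun ζ hζ => by
      rw [Projectivization.setOf_rep_mem_eq_singleton (line ζ)
        (finrank_ker_twistedRows (hgen ζ hζ ⟨0, hm⟩)), Set.encard_singleton]
  have hdisj : (rootTuples K m d : Set (Fin m → K)).PairwiseDisjoint
      fun ζ => {x : ℙ K (Fin (m + 1) → K) | x.rep ∈ line ζ} := by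
    intro ζ hζ ζ' _ hne
    obtain ⟨j, hj⟩ := Function.ne_iff.mp hne
    exact Set.disjoint_left.mpr fun x hx hx' =>
      x.rep_nonzero (eq_zero_of_twistedRows_mulVec_eq_zero (hgen ζ hζ j) hj hx hx')
  rw [hsol, (rootTuples K m d).finite_toSet.encard_biUnion hdisj, finsum_mem_coe_finset,
    Finset.sum_congr rfl hpoint]
  simp

end TwistedSystem

theorem card_rootTuples_complex (m : ℕ) {d : ℕ} (hd : d ≠ 0) :
    (rootTuples ℂ m d).card = d ^ m := by
  rw [rootTuples, Fintype.card_piFinset,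
    (Complex.isPrimitiveRoot_exp d hd).card_nthRootsFinset_of_exists_pow_eq (by norm_num)
      (IsAlgClosed.exists_pow_nat_eq _ (Nat.pos_of_ne_zero hd))]
  simp

section RealTuples

variable {m : ℕ}

def complexRows (v : Fin m → Fin 2 → Fin (m + 1) → ℝ) (k : Fin 2) : Fin m → Fin (m + 1) → ℂ :=
  fun j t => v j k t

theorem setOf_pow_add_pow_eq_zero_eq_empty {d : ℕ} (hd : d ≠ 0) (heven : Even d)
    {v : Fin m → Fin 2 → Fin (m + 1) → ℝ} {ζ : Fin m → ℂ} {j : Fin m}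
    (h : (twistedMatrix (complexRows v 0) (complexRows v 1) ζ j).det ≠ 0) :
    {x : ℙ ℝ (Fin (m + 1) → ℝ) | ∀ i, (v i 0 ⬝ᵥ x.rep) ^ d + (v i 1 ⬝ᵥ x.rep) ^ d = 0} = ∅ := by
  refine Set.eq_empty_of_forall_notMem fun x hx => x.rep_nonzero ?_
  have hzero : ∀ i k, complexRows v k i ⬝ᵥ (fun t => (x.rep t : ℂ)) = 0 := by
    intro i k
    obtain ⟨h0, h1⟩ := (add_eq_zero_iff_of_nonneg (heven.pow_nonneg _) (heven.pow_nonneg _)).mp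
      (hx i)
    have hreal : v i k ⬝ᵥ x.rep = 0 := by
      fin_cases k
      exacts [pow_eq_zero_iff hd |>.mp h0, pow_eq_zero_iff hd |>.mp h1]
    simp only [complexRows, dotProduct] at hreal ⊢
    exact_mod_cast hreal
  have hC := det_twistedMatrix_ne_zero_iff.mp h _
    (twistedRows_mulVec_eq_zero_iff.mpr fun i => by simp [hzero]) (hzero j 1)
  funext t
  exact Complex.ofReal_eq_zero.mp (congrFun hC t)

noncomputable def twistedMatrixLin (ζ : Fin m → ℂ) (j : Fin m) :
    (Fin m → Fin 2 → Fin (m + 1) → ℝ) →ₗ[ℝ] Matrix (Fin (m + 1)) (Fin (m + 1)) ℂ where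
  toFun v := twistedMatrix (complexRows v 0) (complexRows v 1) ζ j
  map_add' v w := by
    ext p q
    induction p using Fin.lastCases
    · simp [complexRows]
    · simp [complexRows, twistedRows]
      ring
  map_smul' c v := by
    ext p q
    induction p using Fin.lastCases
    · simp [complexRows]
    · simp [complexRows, twistedRows]
      ring

def genericTuples (m d : ℕ) : Set (Fin m → Fin 2 → Fin (m + 1) → ℝ) :=
  ⋂ ζ ∈ (rootTuples ℂ m d : Set (Fin m → ℂ)), ⋂ j, {v | (twistedMatrixLin ζ j v).det ≠ 0}

theorem isOpen_genericTuples (d : ℕ) : IsOpen (genericTuples m d) :=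
  isOpen_biInter_finset fun _ _ => isOpen_iInter_of_finite fun _ => isOpen_setOf_det_ne_zero _

theorem dense_genericTuples (d : ℕ) : Dense (genericTuples m d) := by
  set w : Fin m → Fin 2 → Fin (m + 1) → ℝ :=
    fun i => ![Pi.single i.castSucc 1, Pi.single (Fin.last m) 1]
  have hw0 : ∀ i, complexRows w 0 i = Pi.single i.castSucc 1 := fun i => by
    funext t; simp [complexRows, w, Pi.single_apply, apply_ite]
  have hw1 : ∀ i, complexRows w 1 i = Pi.single (Fin.last m) 1 := fun i => by
    funext t; simp [complexRows, w, Pi.single_apply, apply_ite]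
  have hw : ∀ ζ j, (twistedMatrixLin ζ j w).det ≠ 0 := by
    intro ζ j
    refine det_twistedMatrix_ne_zero_iff.mpr fun x hx hlast => ?_
    simp only [twistedRows_mulVec_eq_zero_iff, hw0, hw1, single_dotProduct, one_mul] at hx hlast
    funext t
    induction t using Fin.lastCases
    · exact hlast
    · simp [hx, hlast]
  exact dense_biInter_of_isOpen
    (fun _ _ => isOpen_iInter_of_finite fun _ => isOpen_setOf_det_ne_zero _)
    (rootTuples ℂ m d).countable_toSet
    (fun ζ _ => dense_iInter_of_isOpen (fun _ => isOpen_setOf_det_ne_zero _)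
      fun j => dense_setOf_det_ne_zero _ (hw ζ j))

end RealTuples

/-- Let `d₁` be an even positive integer and let
`v_1^{(1)}, v_1^{(2)}, …, v_m^{(1)}, v_m^{(2)}` be `2m` generic vectors in `ℝ^{m+1}`.
Then the system of `m` equations `(v_j^{(1)}⬝x)^{d₁} + (v_j^{(2)}⬝x)^{d₁} = 0`,
`j = 1, …, m`, has no real solution in `ℙ^m_ℝ`, but has exactly `d₁^m` distinct complex
solutions in `ℙ^m_ℂ`.  Genericity is expressed by a dense open set of tuples of
vectors. -/
theorem even_power_sum_system_no_real_solutions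
    (m d₁ : ℕ) (hm : 0 < m) (hd : 0 < d₁) (heven : Even d₁) :
    ∃ U : Set (Fin m → Fin 2 → (Fin (m + 1) → ℝ)),
      IsOpen U ∧ Dense U ∧ ∀ v ∈ U,
        ({x : Projectivization ℝ (Fin (m + 1) → ℝ) |
            ∀ j, (∑ t, v j 0 t * x.rep t) ^ d₁ + (∑ t, v j 1 t * x.rep t) ^ d₁ = 0}
          = (∅ : Set (Projectivization ℝ (Fin (m + 1) → ℝ)))) ∧
        Set.encard {x : Projectivization ℂ (Fin (m + 1) → ℂ) |
            ∀ j, (∑ t, (v j 0 t : ℂ) * x.rep t) ^ d₁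
               + (∑ t, (v j 1 t : ℂ) * x.rep t) ^ d₁ = 0}
          = ((d₁ ^ m : ℕ) : ℕ∞) := by
  refine ⟨genericTuples m d₁, isOpen_genericTuples d₁, dense_genericTuples d₁, fun v hv => ?_⟩
  have hgen : ∀ ζ ∈ rootTuples ℂ m d₁, ∀ j,
      (twistedMatrix (complexRows v 0) (complexRows v 1) ζ j).det ≠ 0 := by
    simpa [genericTuples, twistedMatrixLin] using hv
  obtain ⟨ζ, hζ⟩ : (rootTuples ℂ m d₁).Nonempty := by
    rw [← Finset.card_pos, card_rootTuples_complex m hd.ne']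
    positivity
  refine ⟨setOf_pow_add_pow_eq_zero_eq_empty hd.ne' heven (hgen ζ hζ ⟨0, hm⟩), ?_⟩
  rw [← card_rootTuples_complex m hd.ne']
  exact encard_setOf_pow_add_pow_eq_zero hm hd.ne' hgen
end

section
/- The set of possible numbers of real points obtained by intersecting the Segre variety SV_{(1,n)}(1,1) (rank-one 2×(n+1) matrices, i.e., the Segre embedding of P^1×P^n in P^{2n+1}) transversely with a real linear subspace of dimension n equals {k : 0 ≤ k ≤ n+1, k ≡ n+1 (mod 2)}. -/
def IsRealPointG {σ : Type} (P : Projectivization ℂ (σ → ℂ)) : Prop :=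
  ∃ v : σ → ℝ, v ≠ 0 ∧ ∃ c : ℂ, c ≠ 0 ∧ P.rep = c • (fun s => (v s : ℂ))

/-- The Segre variety `SV_{(1,n)}(1,1) ⊆ ℙ^{2n+1}`: rank-one `2 × (n+1)` matrices, i.e.
the Segre embedding of `ℙ¹ × ℙⁿ`, described via representatives. -/
def Segre1n (n : ℕ) : Set (Projectivization ℂ (Fin 2 × Fin (n + 1) → ℂ)) :=
  {P | ∃ a : Fin 2 → ℂ, ∃ b : Fin (n + 1) → ℂ,
    ∀ p : Fin 2 × Fin (n + 1), P.rep p = a p.1 * b p.2}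

open Projectivization

noncomputable section SegreAux

noncomputable def Jmap {σ : Type} : (σ → ℂ) →ₛₗ[starRingEnd ℂ] (σ → ℂ) where
  toFun v := fun s => starRingEnd ℂ (v s)
  map_add' u v := by ext s; simp
  map_smul' c v := by ext s; simp

@[simp] lemma Jmap_apply {σ : Type} (v : σ → ℂ) (s : σ) : Jmap v s = starRingEnd ℂ (v s) := rfl

lemma Jmap_inj {σ : Type} : Function.Injective (Jmap (σ := σ)) := by
  intro u v h
  ext s
  exact (starRingEnd ℂ).injective (congrFun h s)

lemma Jmap_ne {σ : Type} {v : σ → ℂ} (hv : v ≠ 0) : Jmap v ≠ 0 :=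
  fun h => hv (Jmap_inj (by simpa using h))

lemma Jmap_Jmap {σ : Type} (v : σ → ℂ) : Jmap (Jmap v) = v := by
  ext s; simp

noncomputable def cP {σ : Type} : Projectivization ℂ (σ → ℂ) → Projectivization ℂ (σ → ℂ) :=
  Projectivization.map Jmap Jmap_inj

lemma exists_rep_mk {σ : Type} (v : σ → ℂ) (hv : v ≠ 0) :
    ∃ c : ℂ, c ≠ 0 ∧ (mk ℂ v hv).rep = c • v := by
  have h := mk_rep (mk ℂ v hv)
  rw [mk_eq_mk_iff'] at h
  obtain ⟨a, ha⟩ := h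
  refine ⟨a, ?_, ha.symm⟩
  rintro rfl
  rw [zero_smul] at ha
  exact (mk ℂ v hv).rep_nonzero ha.symm

lemma cP_eq_mk {σ : Type} (P : Projectivization ℂ (σ → ℂ)) :
    cP P = mk ℂ (Jmap P.rep) (Jmap_ne P.rep_nonzero) := by
  conv_lhs => rw [← mk_rep P]
  rfl

lemma cP_cP {σ : Type} (P : Projectivization ℂ (σ → ℂ)) : cP (cP P) = P := by
  rw [cP_eq_mk, cP_eq_mk]
  conv_rhs => rw [← mk_rep P]
  rw [mk_eq_mk_iff']
  obtain ⟨c, hc, hrep⟩ := exists_rep_mk (Jmap P.rep) (Jmap_ne P.rep_nonzero)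
  refine ⟨starRingEnd ℂ c, ?_⟩
  rw [hrep, map_smulₛₗ, Jmap_Jmap]

lemma cP_fixed_iff {σ : Type} (P : Projectivization ℂ (σ → ℂ)) :
    cP P = P ↔ IsRealPointG P := by
  constructor
  · intro h
    rw [cP_eq_mk] at h
    conv_rhs at h => rw [← mk_rep P]
    rw [mk_eq_mk_iff'] at h
    obtain ⟨a, ha⟩ := h
    have haS : ∀ s, a * P.rep s = starRingEnd ℂ (P.rep s) := by
      intro s
      have := congrFun ha s
      simpa using this
    obtain ⟨s0, hs0⟩ : ∃ s, P.rep s ≠ 0 := by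
      by_contra hcon
      push_neg at hcon
      exact P.rep_nonzero (funext hcon)
    have hkey : starRingEnd ℂ a * a = 1 := by
      have h1 := congrArg (starRingEnd ℂ) (haS s0)
      rw [map_mul, Complex.conj_conj, ← haS s0] at h1
      have h2 : (starRingEnd ℂ a * a) * P.rep s0 = 1 * P.rep s0 := by
        rw [one_mul, mul_assoc]; exact h1
      exact mul_right_cancel₀ hs0 h2
    have ha0 : a ≠ 0 := by
      intro h0
      rw [h0, map_zero, zero_mul] at hkey
      exact zero_ne_one hkey
    obtain ⟨b, hb⟩ := IsAlgClosed.exists_pow_nat_eq a (n := 2) (by norm_num)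
    have hb0 : b ≠ 0 := by rintro rfl; rw [zero_pow (by norm_num)] at hb; exact ha0 hb.symm
    have hbconj : starRingEnd ℂ b * b = 1 := by
      have hx2 : ((Complex.normSq b : ℝ) : ℂ) ^ 2 = 1 := by
        rw [← Complex.mul_conj b]
        calc (b * starRingEnd ℂ b) ^ 2 = (starRingEnd ℂ b * b) ^ 2 := by ring
        _ = starRingEnd ℂ (b ^ 2) * b ^ 2 := by rw [map_pow]; ring
        _ = 1 := by rw [hb, hkey]
      have hxR : (Complex.normSq b) ^ 2 = 1 := by
        exact_mod_cast hx2
      have : Complex.normSq b = 1 := by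
        nlinarith [Complex.normSq_nonneg b]
      calc starRingEnd ℂ b * b = b * starRingEnd ℂ b := by ring
      _ = (Complex.normSq b : ℂ) := Complex.mul_conj b
      _ = 1 := by rw [this]; norm_num
    set c : ℂ := starRingEnd ℂ b with hcdef
    have hcne : c ≠ 0 := by simpa [hcdef] using hb0
    have hcoef : c⁻¹ = b := by
      rw [hcdef, inv_eq_one_div, eq_comm, eq_div_iff (by simpa [hcdef] using hb0)]
      rw [mul_comm]; exact hbconj
    have hreal : ∀ s, starRingEnd ℂ (c⁻¹ * P.rep s) = c⁻¹ * P.rep s := by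
      intro s
      rw [map_mul, ← haS s, hcoef]
      rw [show (starRingEnd ℂ) b * (a * P.rep s) = (starRingEnd ℂ b * b) * (b * P.rep s) by
        rw [← hb]; ring, ← hcdef, hbconj, one_mul]
    refine ⟨fun s => (c⁻¹ * P.rep s).re, ?_, c, hcne, ?_⟩
    · intro h0
      apply hs0
      have h1 := congrFun h0 s0
      simp only [Pi.zero_apply] at h1
      have h2 : c⁻¹ * P.rep s0 = 0 := by
        have := Complex.conj_eq_iff_re.mp (hreal s0)
        rw [← this, h1, Complex.ofReal_zero]
      rcases mul_eq_zero.mp h2 with h | h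
      · exact absurd h (inv_ne_zero hcne)
      · exact absurd h hs0
    · ext s
      have := Complex.conj_eq_iff_re.mp (hreal s)
      simp only [Pi.smul_apply, smul_eq_mul]
      rw [this, ← mul_assoc, mul_inv_cancel₀ hcne, one_mul]
  · rintro ⟨v, hv, c, hc, hrep⟩
    rw [cP_eq_mk]
    conv_rhs => rw [← mk_rep P]
    rw [mk_eq_mk_iff']
    refine ⟨starRingEnd ℂ c / c, ?_⟩
    ext s
    simp only [Pi.smul_apply, smul_eq_mul, Jmap_apply, hrep, map_mul, Complex.conj_ofReal]
    field_simp


lemma invol_parity_aux {α : Type*} : ∀ (N : ℕ) (S : Set α) (_ : S.Finite) (_ : S.ncard ≤ N)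
    (f : α → α) (_ : ∀ x ∈ S, f x ∈ S) (_ : ∀ x ∈ S, f (f x) = x),
    {x ∈ S | f x = x}.ncard % 2 = S.ncard % 2 := by
  intro N
  induction N with
  | zero =>
    intro S hS hcard f hf hff
    have h0 : S.ncard = 0 := Nat.le_zero.mp hcard
    have : S = ∅ := (Set.ncard_eq_zero hS).mp h0
    subst this
    simp
  | succ N ih =>
    intro S hS hcard f hf hff
    by_cases hall : ∀ x ∈ S, f x = x
    · congr 1
      apply congrArg
      ext x
      simp only [Set.mem_setOf_eq]
      exact ⟨fun h => h.1, fun h => ⟨h, hall x h⟩⟩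
    · push_neg at hall
      obtain ⟨x, hxS, hfx⟩ := hall
      have hfxS : f x ∈ S := hf x hxS
      set T : Set α := S \ {x, f x} with hT
      have hTsub : T ⊆ S := Set.diff_subset
      have hTfin : T.Finite := hS.subset hTsub
      have hpair : ({x, f x} : Set α) ⊆ S := by
        intro y hy; rcases hy with rfl | hy
        · exact hxS
        · simp at hy; subst hy; exact hfxS
      have hpaircard : ({x, f x} : Set α).ncard = 2 := Set.ncard_pair hfx.symm
      have hTcard : T.ncard = S.ncard - 2 := by
        rw [hT, Set.ncard_diff hpair, hpaircard]
      have h2le : 2 ≤ S.ncard := by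
        rw [← hpaircard]
        exact Set.ncard_le_ncard hpair hS
      have hfT : ∀ y ∈ T, f y ∈ T := by
        rintro y ⟨hyS, hy⟩
        simp only [Set.mem_insert_iff, Set.mem_singleton_iff, not_or] at hy
        refine ⟨hf y hyS, ?_⟩
        simp only [Set.mem_insert_iff, Set.mem_singleton_iff, not_or]
        constructor
        · intro h; exact hy.2 (by rw [← hff y hyS, h])
        · intro h
          exact hy.1 (by rw [← hff y hyS, h, hff x hxS])
      have hffT : ∀ y ∈ T, f (f y) = y := fun y hy => hff y (hTsub hy)
      have hfix : {y ∈ T | f y = y} = {y ∈ S | f y = y} := by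
        ext y
        simp only [Set.mem_setOf_eq]
        constructor
        · rintro ⟨hy, h⟩; exact ⟨hTsub hy, h⟩
        · rintro ⟨hy, h⟩
          refine ⟨⟨hy, ?_⟩, h⟩
          simp only [Set.mem_insert_iff, Set.mem_singleton_iff, not_or]
          constructor
          · rintro rfl; exact hfx h
          · rintro rfl; rw [hff x hxS] at h; exact hfx h.symm
      have := ih T hTfin (by omega) f hfT hffT
      rw [hfix] at this
      rw [this, hTcard]
      omega

lemma invol_parity {α : Type*} (S : Set α) (hS : S.Finite)
    (f : α → α) (hf : ∀ x ∈ S, f x ∈ S) (hff : ∀ x ∈ S, f (f x) = x) :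
    {x ∈ S | f x = x}.ncard % 2 = S.ncard % 2 :=
  invol_parity_aux S.ncard S hS le_rfl f hf hff


def tre (k m : ℕ) : ℝ := if m < k then m else ((m - k)/2 : ℕ)
def tim (k m : ℕ) : ℝ := if m < k then 0 else (-1)^(m-k)
def tval (k m : ℕ) : ℂ := (tre k m : ℂ) + (tim k m : ℂ) * Complex.I

def MvGen (n : ℕ) (u : ℂ) : Fin 2 × Fin (n + 1) → ℂ := fun p => u ^ ((p.2 : ℕ) + (p.1 : ℕ))

lemma tval_real {k m : ℕ} (h : m < k) : tval k m = ((m : ℝ) : ℂ) := by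
  rw [tval, tim, if_pos h, tre, if_pos h]; simp

lemma tval_conj_even {k m : ℕ} (hge : ¬ m < k) (hev : (m - k) % 2 = 0) :
    starRingEnd ℂ (tval k m) = tval k (m + 1) := by
  have hge1 : ¬ m + 1 < k := by omega
  rw [tval, tval, map_add, map_mul, Complex.conj_I, Complex.conj_ofReal, Complex.conj_ofReal]
  simp only [tre, tim, if_neg hge, if_neg hge1]
  have h1 : (m + 1 - k)/2 = (m - k)/2 := by omega
  have h2 : (-1 : ℝ)^(m + 1 - k) = -(-1 : ℝ)^(m - k) := by
    have : m + 1 - k = (m - k) + 1 := by omega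
    rw [this, pow_succ]
    ring
  rw [h1, h2]
  push_cast
  ring

lemma conj_MvGen_even {n k : ℕ} {m : ℕ} (hge : ¬ m < k) (hev : (m - k) % 2 = 0)
    (p : Fin 2 × Fin (n + 1)) :
    starRingEnd ℂ (MvGen n (tval k m) p) = MvGen n (tval k (m + 1)) p := by
  simp only [MvGen, map_pow, tval_conj_even hge hev]

lemma conj_MvGen_real {n k : ℕ} {m : ℕ} (h : m < k) (p : Fin 2 × Fin (n + 1)) :
    starRingEnd ℂ (MvGen n (tval k m) p) = MvGen n (tval k m) p := by
  simp only [MvGen, map_pow, tval_real h, Complex.conj_ofReal]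

def wfunN (n k : ℕ) (j : ℕ) (p : Fin 2 × Fin (n + 1)) : ℝ :=
  if j < k ∨ (j - k) % 2 = 0 then (MvGen n (tval k j) p).re
  else (MvGen n (tval k (j - 1)) p).im

lemma ofReal_re_eq (z : ℂ) : ((z.re : ℝ) : ℂ) = (z + starRingEnd ℂ z) / 2 := by
  rw [Complex.add_conj]
  push_cast
  ring

lemma ofReal_im_eq (z : ℂ) : ((z.im : ℝ) : ℂ) = (z - starRingEnd ℂ z) / (2 * Complex.I) := by
  rw [Complex.sub_conj]
  have h2 : (2 : ℂ) * Complex.I ≠ 0 := by simp [Complex.I_ne_zero]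
  field_simp
  push_cast <;> ring

lemma conj_eq_re_sub_im (z : ℂ) :
    starRingEnd ℂ z = ((z.re : ℝ) : ℂ) - ((z.im : ℝ) : ℂ) * Complex.I := by
  apply Complex.ext <;> simp

variable {n k : ℕ}

lemma span_eq (hk : k ≤ n + 1) (hpar : k % 2 = (n + 1) % 2) :
    Submodule.span ℂ (Set.range (fun j : Fin (n+1) => fun p => ((wfunN n k (j : ℕ) p : ℝ) : ℂ)))
    = Submodule.span ℂ (Set.range (fun m : Fin (n+1) => MvGen n (tval k (m : ℕ)))) := by
  have hsucc : ∀ j : Fin (n + 1), ¬ (j : ℕ) < k → ((j : ℕ) - k) % 2 = 0 → (j : ℕ) + 1 < n + 1 := by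
    intro j h1 h2
    have := j.2
    omega
  apply le_antisymm
  · rw [Submodule.span_le]
    rintro _ ⟨j, rfl⟩
    show (fun p => ((wfunN n k (j : ℕ) p : ℝ) : ℂ)) ∈ _
    by_cases h1 : (j : ℕ) < k
    · apply Submodule.subset_span
      refine ⟨j, ?_⟩
      funext p
      simp only [wfunN, if_pos (Or.inl h1)]
      rw [ofReal_re_eq, conj_MvGen_real h1]
      ring
    · by_cases h2 : ((j : ℕ) - k) % 2 = 0
      · have hlt := hsucc j h1 h2
        have heq : (fun p => ((wfunN n k (j : ℕ) p : ℝ) : ℂ))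
            = (2⁻¹ : ℂ) • MvGen n (tval k (j : ℕ))
              + (2⁻¹ : ℂ) • MvGen n (tval k ((j : ℕ) + 1)) := by
          funext p
          simp only [wfunN, if_pos (Or.inr h2), Pi.add_apply, Pi.smul_apply, smul_eq_mul]
          rw [ofReal_re_eq, conj_MvGen_even h1 h2]
          ring
        rw [heq]
        exact Submodule.add_mem _
          (Submodule.smul_mem _ _ (Submodule.subset_span ⟨j, rfl⟩))
          (Submodule.smul_mem _ _ (Submodule.subset_span ⟨⟨(j : ℕ) + 1, hlt⟩, rfl⟩))
      · have hj1 : k < (j : ℕ) := by omega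
        have hlt' : (j : ℕ) - 1 < n + 1 := by have := j.2; omega
        have hge' : ¬ ((j : ℕ) - 1) < k := by omega
        have hev' : (((j : ℕ) - 1) - k) % 2 = 0 := by omega
        have hco : ∀ p : Fin 2 × Fin (n + 1),
            starRingEnd ℂ (MvGen n (tval k ((j : ℕ) - 1)) p) = MvGen n (tval k (j : ℕ)) p := by
          intro p
          rw [conj_MvGen_even hge' hev']
          congr 2
          omega
        have heq : (fun p => ((wfunN n k (j : ℕ) p : ℝ) : ℂ))
            = ((2 * Complex.I)⁻¹ : ℂ) • MvGen n (tval k ((j : ℕ) - 1))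
              - ((2 * Complex.I)⁻¹ : ℂ) • MvGen n (tval k (j : ℕ)) := by
          funext p
          simp only [wfunN, if_neg (show ¬ ((j : ℕ) < k ∨ ((j : ℕ) - k) % 2 = 0) by omega),
            Pi.sub_apply, Pi.smul_apply, smul_eq_mul]
          rw [ofReal_im_eq, hco p]
          ring
        rw [heq]
        exact Submodule.sub_mem _
          (Submodule.smul_mem _ _ (Submodule.subset_span ⟨⟨(j : ℕ) - 1, hlt'⟩, rfl⟩))
          (Submodule.smul_mem _ _ (Submodule.subset_span ⟨j, rfl⟩))
  · rw [Submodule.span_le]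
    rintro _ ⟨m, rfl⟩
    show MvGen n (tval k (m : ℕ)) ∈ _
    by_cases h1 : (m : ℕ) < k
    · apply Submodule.subset_span
      refine ⟨m, ?_⟩
      funext p
      simp only [wfunN, if_pos (Or.inl h1)]
      rw [ofReal_re_eq, conj_MvGen_real h1]
      ring
    · by_cases h2 : ((m : ℕ) - k) % 2 = 0
      · have hlt := hsucc m h1 h2
        have heq : MvGen n (tval k (m : ℕ))
            = (fun p => ((wfunN n k (m : ℕ) p : ℝ) : ℂ))
              + Complex.I • (fun p => ((wfunN n k ((m : ℕ) + 1) p : ℝ) : ℂ)) := by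
          funext p
          simp only [Pi.add_apply, Pi.smul_apply, smul_eq_mul]
          have hw2 : wfunN n k ((m : ℕ) + 1) p = (MvGen n (tval k (m : ℕ)) p).im := by
            simp only [wfunN, if_neg (show ¬ ((m:ℕ)+1 < k ∨ (((m:ℕ)+1) - k) % 2 = 0) by omega)]
            norm_num
          rw [hw2]
          simp only [wfunN, if_pos (Or.inr h2)]
          rw [mul_comm]
          exact (Complex.re_add_im _).symm
        rw [heq]
        exact Submodule.add_mem _
          (Submodule.subset_span ⟨m, rfl⟩)
          (Submodule.smul_mem _ _ (Submodule.subset_span ⟨⟨(m : ℕ) + 1, hlt⟩, rfl⟩))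
      · have hj1 : k < (m : ℕ) := by omega
        have hlt' : (m : ℕ) - 1 < n + 1 := by have := m.2; omega
        have hge' : ¬ ((m : ℕ) - 1) < k := by omega
        have hev' : (((m : ℕ) - 1) - k) % 2 = 0 := by omega
        have hco : ∀ p : Fin 2 × Fin (n + 1),
            starRingEnd ℂ (MvGen n (tval k ((m : ℕ) - 1)) p) = MvGen n (tval k (m : ℕ)) p := by
          intro p
          rw [conj_MvGen_even hge' hev']
          congr 2
          omega
        have heq : MvGen n (tval k (m : ℕ))
            = (fun p => ((wfunN n k ((m : ℕ) - 1) p : ℝ) : ℂ))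
              - Complex.I • (fun p => ((wfunN n k (m : ℕ) p : ℝ) : ℂ)) := by
          funext p
          simp only [Pi.sub_apply, Pi.smul_apply, smul_eq_mul]
          have hw1 : wfunN n k ((m : ℕ) - 1) p = (MvGen n (tval k ((m : ℕ) - 1)) p).re := by
            simp only [wfunN, if_pos (Or.inr hev')]
          have hw2 : wfunN n k (m : ℕ) p = (MvGen n (tval k ((m : ℕ) - 1)) p).im := by
            simp only [wfunN, if_neg (show ¬ ((m:ℕ) < k ∨ ((m:ℕ) - k) % 2 = 0) by omega)]
          rw [hw1, hw2, ← hco p, conj_eq_re_sub_im]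
          ring
        rw [heq]
        exact Submodule.sub_mem _
          (Submodule.subset_span ⟨⟨(m : ℕ) - 1, hlt'⟩, rfl⟩)
          (Submodule.smul_mem _ _ (Submodule.subset_span ⟨m, rfl⟩))


@[simp] lemma tval_re (k m : ℕ) : (tval k m).re = tre k m := by simp [tval]
@[simp] lemma tval_im (k m : ℕ) : (tval k m).im = tim k m := by simp [tval]

lemma tim_ne_zero_of_ge {k m : ℕ} (h : ¬ m < k) : tim k m ≠ 0 := by
  rw [tim, if_neg h]
  positivity

lemma tval_inj (k : ℕ) : Function.Injective (tval k) := by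
  intro m m' h
  have hre : tre k m = tre k m' := by rw [← tval_re k m, ← tval_re k m', h]
  have him : tim k m = tim k m' := by rw [← tval_im k m, ← tval_im k m', h]
  by_cases h1 : m < k <;> by_cases h2 : m' < k
  · rw [tre, if_pos h1, tre, if_pos h2] at hre
    exact_mod_cast hre
  · exfalso
    simp only [tim, if_pos h1, if_neg h2] at him
    exact absurd him.symm (by positivity)
  · exfalso
    simp only [tim, if_neg h1, if_pos h2] at him
    exact absurd him (by positivity)
  · simp only [tre, if_neg h1, if_neg h2] at hre
    simp only [tim, if_neg h1, if_neg h2] at him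
    have hdiv : (m - k)/2 = (m' - k)/2 := by exact_mod_cast hre
    have hmod : (m - k) % 2 = (m' - k) % 2 := by
      rcases Nat.even_or_odd (m - k) with he | ho
      · rcases Nat.even_or_odd (m' - k) with he' | ho'
        · rw [Nat.even_iff] at he he'; omega
        · exfalso
          rw [he.neg_one_pow, ho'.neg_one_pow] at him
          norm_num at him
      · rcases Nat.even_or_odd (m' - k) with he' | ho'
        · exfalso
          rw [ho.neg_one_pow, he'.neg_one_pow] at him
          norm_num at him
        · rw [Nat.odd_iff] at ho ho'; omega
    omega



lemma vand_unique {N : ℕ} (u : Fin N → ℂ) (hu : Function.Injective u) (c : Fin N → ℂ)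
    (h : ∀ j : Fin N, ∑ m, c m * u m ^ (j : ℕ) = 0) : c = 0 := by
  have hli : LinearIndependent ℂ (fun i => fun j : Fin N => u i ^ (j : ℕ)) := by
    have hunit : IsUnit (Matrix.vandermonde u) := by
      rw [Matrix.isUnit_iff_isUnit_det, isUnit_iff_ne_zero]
      rw [Ne, Matrix.det_vandermonde_eq_zero_iff]
      rintro ⟨i, j, hij, hne⟩
      exact hne (hu hij)
    have := Matrix.linearIndependent_rows_iff_isUnit.mpr hunit
    exact this
  have := Fintype.linearIndependent_iff.mp hli c ?_
  · ext m; exact this m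
  · ext j
    simpa [Finset.sum_apply] using h j

lemma MvGen_ne {n : ℕ} (u : ℂ) : (MvGen n u) ≠ 0 := by
  intro h
  have := congrFun h (0, 0)
  simp [MvGen] at this

lemma inter_eq {n : ℕ} (u : Fin (n + 1) → ℂ) (hu : Function.Injective u) :
    Segre1n n ∩ {P | P.rep ∈ Submodule.span ℂ (Set.range (fun m => MvGen n (u m)))}
      = Set.range (fun m => mk ℂ (MvGen n (u m)) (MvGen_ne _)) := by
  ext P
  constructor
  · rintro ⟨⟨a, b, hab⟩, hspan⟩
    rw [Set.mem_setOf_eq, Submodule.mem_span_range_iff_exists_fun] at hspan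
    obtain ⟨c, hc⟩ := hspan
    set L : ℕ → ℂ := fun j => ∑ m, c m * u m ^ j with hL
    have hrepval : ∀ p : Fin 2 × Fin (n+1), P.rep p = L ((p.2 : ℕ) + (p.1 : ℕ)) := by
      intro p
      rw [← hc]
      simp [MvGen, Finset.sum_apply, hL]
    have hL0 : ∀ l : Fin (n + 1), a 0 * b l = L (l : ℕ) := by
      intro l
      rw [← hab (0, l)]
      exact hrepval (0, l)
    have hL1 : ∀ l : Fin (n + 1), a 1 * b l = L ((l : ℕ) + 1) := by
      intro l
      rw [← hab (1, l)]
      exact hrepval (1, l)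
    have hbne : ∃ l, b l ≠ 0 := by
      by_contra hcon
      push_neg at hcon
      apply P.rep_nonzero
      funext p
      rw [hab p, hcon p.2, mul_zero]; rfl
    by_cases ha0 : a 0 = 0
    · exfalso
      have hzero : ∀ j : Fin (n + 1), ∑ m, c m * u m ^ (j : ℕ) = 0 := by
        intro j
        have h1 := hL0 j
        rw [ha0, zero_mul] at h1
        exact h1.symm
      have hc0 : c = 0 := vand_unique u hu c hzero
      apply P.rep_nonzero
      rw [← hc, hc0]
      simp
    · set s := a 1 / a 0 with hs
      have hstep : ∀ l : Fin (n + 1), L ((l : ℕ) + 1) = s * L (l : ℕ) := by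
        intro l
        rw [← hL1 l, ← hL0 l, hs]
        field_simp
      have hpow : ∀ j, j ≤ n + 1 → L j = s ^ j * L 0 := by
        intro j
        induction j with
        | zero => intro _; simp
        | succ i ih =>
          intro hle
          have h1 := hstep ⟨i, by omega⟩
          simp only at h1
          rw [h1, ih (by omega), pow_succ]
          ring
      have hL0ne : L 0 ≠ 0 := by
        obtain ⟨l, hl⟩ := hbne
        intro h0
        have h1 : L (l : ℕ) = 0 := by
          rw [hpow l (by omega), h0, mul_zero]
        rw [← hL0 l] at h1
        exact (mul_ne_zero ha0 hl) h1
      -- the polynomial with roots u m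
      set p : Polynomial ℂ := ∏ m, (Polynomial.X - Polynomial.C (u m)) with hp
      have hpmonic : p.Monic := Polynomial.monic_prod_of_monic _ _ fun m _ =>
        Polynomial.monic_X_sub_C (u m)
      have hpdeg : p.natDegree = n + 1 := by
        rw [hp, Polynomial.natDegree_prod _ _ (fun m _ => Polynomial.X_sub_C_ne_zero (u m))]
        simp [Polynomial.natDegree_X_sub_C]
      have hrel : ∑ j ∈ Finset.range (n + 2), p.coeff j * L j = 0 := by
        have hswap : ∑ j ∈ Finset.range (n + 2), p.coeff j * L j
            = ∑ m, c m * (∑ j ∈ Finset.range (n + 2), p.coeff j * u m ^ j) := by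
          calc ∑ j ∈ Finset.range (n + 2), p.coeff j * L j
              = ∑ j ∈ Finset.range (n + 2), ∑ m, c m * (p.coeff j * u m ^ j) := by
                apply Finset.sum_congr rfl
                intro j _
                rw [hL]
                rw [Finset.mul_sum]
                apply Finset.sum_congr rfl
                intro m _
                ring
            _ = ∑ m, ∑ j ∈ Finset.range (n + 2), c m * (p.coeff j * u m ^ j) :=
                Finset.sum_comm
            _ = ∑ m, c m * (∑ j ∈ Finset.range (n + 2), p.coeff j * u m ^ j) := by
                apply Finset.sum_congr rfl
                intro m _
                rw [Finset.mul_sum]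
        rw [hswap]
        have heval : ∀ m : Fin (n + 1), ∑ j ∈ Finset.range (n + 2), p.coeff j * u m ^ j = 0 := by
          intro m
          have h1 : p.eval (u m) = 0 := by
            rw [hp, Polynomial.eval_prod]
            apply Finset.prod_eq_zero (Finset.mem_univ m)
            simp
          rw [← h1, Polynomial.eval_eq_sum_range]
          rw [hpdeg]
        simp only [heval, mul_zero, Finset.sum_const_zero]
      have hevals : p.eval s = 0 := by
        have h1 : ∑ j ∈ Finset.range (n + 2), p.coeff j * L j
            = (∑ j ∈ Finset.range (n + 2), p.coeff j * s ^ j) * L 0 := by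
          rw [Finset.sum_mul]
          apply Finset.sum_congr rfl
          intro j hj
          rw [Finset.mem_range] at hj
          rw [hpow j (by omega)]
          ring
        rw [h1] at hrel
        have h2 : ∑ j ∈ Finset.range (n + 2), p.coeff j * s ^ j = 0 :=
          (mul_eq_zero.mp hrel).resolve_right hL0ne
        rw [Polynomial.eval_eq_sum_range, hpdeg]
        exact h2
      obtain ⟨m0, hm0⟩ : ∃ m0, s = u m0 := by
        rw [hp, Polynomial.eval_prod] at hevals
        obtain ⟨m0, _, hm⟩ := Finset.prod_eq_zero_iff.mp hevals
        refine ⟨m0, ?_⟩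
        simp only [Polynomial.eval_sub, Polynomial.eval_X, Polynomial.eval_C] at hm
        exact sub_eq_zero.mp hm
      have hcval : ∀ m, c m = if m = m0 then L 0 else 0 := by
        have hz : ∀ j : Fin (n + 1),
            ∑ m, (c m - (if m = m0 then L 0 else 0)) * u m ^ (j : ℕ) = 0 := by
          intro j
          have h1 : ∑ m, (c m - (if m = m0 then L 0 else 0)) * u m ^ (j : ℕ)
              = L (j : ℕ) - L 0 * u m0 ^ (j : ℕ) := by
            simp only [sub_mul, ite_mul, zero_mul]
            rw [Finset.sum_sub_distrib]
            congr 1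
            simp
          rw [h1, hpow j (by omega), hm0]
          ring
        have := vand_unique u hu _ hz
        intro m
        have h2 := congrFun this m
        simp only [Pi.zero_apply] at h2
        exact sub_eq_zero.mp h2
      have hrepeq : P.rep = L 0 • MvGen n (u m0) := by
        rw [← hc]
        calc ∑ m, c m • MvGen n (u m)
            = ∑ m, (if m = m0 then L 0 else 0) • MvGen n (u m) := by
              apply Finset.sum_congr rfl
              intro m _
              rw [hcval m]
          _ = L 0 • MvGen n (u m0) := by simp [ite_smul]
      refine ⟨m0, ?_⟩
      rw [← mk_rep P, mk_eq_mk_iff']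
      exact ⟨(L 0)⁻¹, by rw [hrepeq, smul_smul, inv_mul_cancel₀ hL0ne, one_smul]⟩
  · rintro ⟨m, rfl⟩
    have hrep := mk_rep (mk ℂ (MvGen n (u m)) (MvGen_ne _))
    rw [mk_eq_mk_iff'] at hrep
    obtain ⟨d, hd⟩ := hrep
    constructor
    · refine ⟨fun i => d * u m ^ (i : ℕ), fun l => u m ^ (l : ℕ), ?_⟩
      intro p
      rw [← hd]
      simp only [Pi.smul_apply, smul_eq_mul, MvGen]
      rw [pow_add]
      ring
    · rw [Set.mem_setOf_eq, ← hd]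
      exact Submodule.smul_mem _ _ (Submodule.subset_span ⟨m, rfl⟩)


lemma F_inj {n : ℕ} (u : Fin (n + 1) → ℂ) (hu : Function.Injective u) :
    Function.Injective (fun m => mk ℂ (MvGen n (u m)) (MvGen_ne _)) := by
  intro m m' h
  simp only [mk_eq_mk_iff'] at h
  obtain ⟨d, hd⟩ := h
  have h00 := congrFun hd ((0 : Fin 2), (0 : Fin (n+1)))
  have h10 := congrFun hd ((1 : Fin 2), (0 : Fin (n+1)))
  simp only [Pi.smul_apply, smul_eq_mul, MvGen] at h00 h10
  norm_num at h00 h10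
  apply hu
  rw [← h10, h00, one_mul]

lemma encard_range_F {n : ℕ} (u : Fin (n + 1) → ℂ) (hu : Function.Injective u) :
    Set.encard (Set.range (fun m => mk ℂ (MvGen n (u m)) (MvGen_ne _))) = ((n + 1 : ℕ) : ℕ∞) := by
  rw [← Set.image_univ, Function.Injective.encard_image (F_inj u hu), Set.encard_univ]
  simp

lemma real_mk {n k : ℕ} {m : Fin (n + 1)} (h : (m : ℕ) < k) :
    IsRealPointG (mk ℂ (MvGen n (tval k (m : ℕ))) (MvGen_ne _)) := by
  obtain ⟨c, hc, hrep⟩ := exists_rep_mk (MvGen n (tval k (m : ℕ))) (MvGen_ne _)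
  refine ⟨fun p => ((m : ℕ) : ℝ) ^ ((p.2 : ℕ) + (p.1 : ℕ)), ?_, c, hc, ?_⟩
  · intro h0
    have := congrFun h0 ((0 : Fin 2), (0 : Fin (n+1)))
    norm_num at this
  · rw [hrep]
    funext p
    simp only [Pi.smul_apply, smul_eq_mul, MvGen, tval_real h]
    push_cast
    ring

lemma notreal_mk {n k : ℕ} {m : Fin (n + 1)} (h : ¬ (m : ℕ) < k) :
    ¬ IsRealPointG (mk ℂ (MvGen n (tval k (m : ℕ))) (MvGen_ne _)) := by
  rintro ⟨v, hv, d, hd, hrep⟩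
  obtain ⟨c, hc, hrep'⟩ := exists_rep_mk (MvGen n (tval k (m : ℕ))) (MvGen_ne _)
  have heq : c • MvGen n (tval k (m : ℕ)) = d • (fun p => ((v p : ℝ) : ℂ)) := by
    rw [← hrep', hrep]
  have h00 := congrFun heq ((0 : Fin 2), (0 : Fin (n+1)))
  have h10 := congrFun heq ((1 : Fin 2), (0 : Fin (n+1)))
  simp only [Pi.smul_apply, smul_eq_mul, MvGen] at h00 h10
  norm_num at h00 h10
  change c = d * ((v 0 : ℝ) : ℂ) at h00
  -- h00 : c = d * v(0,0), h10 : c * tval = d * v(1,0)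
  set z := tval k (m : ℕ) with hz
  have him : z.im ≠ 0 := by
    rw [hz, tval_im, tim, if_neg h]
    positivity
  have hd0 : d ≠ 0 := by
    rintro rfl
    rw [zero_mul] at h00
    exact hc h00
  have hv00 : ((v 0 : ℝ) : ℂ) ≠ 0 := by
    intro h0
    rw [h0, mul_zero] at h00
    exact hc h00
  have hz2 : z * ((v 0 : ℝ) : ℂ) = ((v (1, 0) : ℝ) : ℂ) := by
    apply mul_left_cancel₀ hd0
    calc d * (z * ((v 0 : ℝ) : ℂ)) = z * c := by rw [h00]; ring
    _ = d * ((v (1, 0) : ℝ) : ℂ) := by rw [mul_comm z c]; exact h10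
  have hz3 : z = (((v (1, 0) / v 0) : ℝ) : ℂ) := by
    rw [Complex.ofReal_div, eq_div_iff hv00]
    exact hz2
  apply him
  rw [hz3, Complex.ofReal_im]


lemma MvGen_li {n : ℕ} (u : Fin (n + 1) → ℂ) (hu : Function.Injective u) :
    LinearIndependent ℂ (fun m => MvGen n (u m)) := by
  have hli : LinearIndependent ℂ (fun i => fun j : Fin (n+1) => u i ^ (j : ℕ)) := by
    have hunit : IsUnit (Matrix.vandermonde u) := by
      rw [Matrix.isUnit_iff_isUnit_det, isUnit_iff_ne_zero]
      rw [Ne, Matrix.det_vandermonde_eq_zero_iff]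
      rintro ⟨i, j, hij, hne⟩
      exact hne (hu hij)
    have := Matrix.linearIndependent_rows_iff_isUnit.mpr hunit
    exact this
  let proj : ((Fin 2 × Fin (n+1)) → ℂ) →ₗ[ℂ] (Fin (n+1) → ℂ) :=
    { toFun := fun v => fun l => v (0, l)
      map_add' := fun x y => rfl
      map_smul' := fun c x => rfl }
  apply LinearIndependent.of_comp proj
  exact hli

-- LinearIndependent ℝ of the real family, given span equality
lemma li_real {n : ℕ} (w : Fin (n + 1) → (Fin 2 × Fin (n + 1) → ℝ))
    (u : Fin (n + 1) → ℂ) (hu : Function.Injective u)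
    (hspan : Submodule.span ℂ (Set.range (fun j => fun p => ((w j p : ℝ) : ℂ)))
      = Submodule.span ℂ (Set.range (fun m => MvGen n (u m)))) :
    LinearIndependent ℝ w := by
  have hliM := MvGen_li u hu
  have hfr : Set.finrank ℂ (Set.range (fun m => MvGen n (u m))) = n + 1 := by
    have := finrank_span_eq_card hliM
    rw [Set.finrank, this]
    simp
  have hliW : LinearIndependent ℂ (fun j => fun p => ((w j p : ℝ) : ℂ)) := by
    rw [linearIndependent_iff_card_eq_finrank_span]
    rw [Set.finrank, hspan, ← Set.finrank, hfr]
    simp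
  have hliWR : LinearIndependent ℝ (fun j => fun p => ((w j p : ℝ) : ℂ)) := by
    apply hliW.restrict_scalars
    intro a b hab
    simpa using hab
  let coeL : ((Fin 2 × Fin (n+1)) → ℝ) →ₗ[ℝ] ((Fin 2 × Fin (n+1)) → ℂ) :=
    { toFun := fun v => fun p => ((v p : ℝ) : ℂ)
      map_add' := fun x y => by funext p; simp
      map_smul' := fun c x => by funext p; simp }
  exact LinearIndependent.of_comp coeL hliWR

lemma ncard_small {n k : ℕ} (hk : k ≤ n + 1) :
    Set.ncard {m : Fin (n + 1) | (m : ℕ) < k} = k := by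
  have hset : {m : Fin (n + 1) | (m : ℕ) < k}
      = Set.range (fun i : Fin k => (⟨(i : ℕ), by omega⟩ : Fin (n + 1))) := by
    ext m
    constructor
    · intro hm
      exact ⟨⟨(m : ℕ), hm⟩, by simp⟩
    · rintro ⟨i, rfl⟩
      exact i.2
  rw [hset, ← Set.image_univ, Set.ncard_image_of_injective _ ?hinj, Set.ncard_univ]
  · simp
  · intro i i' h
    simpa [Fin.ext_iff] using h

end SegreAux

/-- The set of possible numbers of real points obtained by intersecting
`SV_{(1,n)}(1,1)` transversely with a real linear subspace of projective dimension `n`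
(spanned by `n+1` independent real vectors; transversality means `deg X = n+1` distinct
complex intersection points) equals `{k : 0 ≤ k ≤ n+1, k ≡ n+1 (mod 2)}`. -/
theorem possible_real_counts_segre_one_n (n : ℕ) :
    {k : ℕ | ∃ w : Fin (n + 1) → (Fin 2 × Fin (n + 1) → ℝ),
        LinearIndependent ℝ w ∧
        Set.encard (Segre1n n ∩
            {P | P.rep ∈ Submodule.span ℂ (Set.range fun j => fun s => ((w j s : ℝ) : ℂ))})
          = ((n + 1 : ℕ) : ℕ∞) ∧
        k = Set.ncard {P ∈ Segre1n n ∩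
            {P | P.rep ∈ Submodule.span ℂ (Set.range fun j => fun s => ((w j s : ℝ) : ℂ))} |
            IsRealPointG P}}
      = {k : ℕ | k ≤ n + 1 ∧ k % 2 = (n + 1) % 2} := by
  ext k
  simp only [Set.mem_setOf_eq]
  constructor
  · -- upper bound and parity for any achievable k
    rintro ⟨w, hli, henc, hkdef⟩
    set S := Segre1n n ∩
        {P | P.rep ∈ Submodule.span ℂ (Set.range fun j => fun s => ((w j s : ℝ) : ℂ))} with hSdef
    have hfin : S.Finite := Set.finite_of_encard_eq_coe henc
    have hncard : S.ncard = n + 1 := by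
      rw [Set.ncard_def, henc]
      rfl
    have hstab : ∀ P ∈ S, cP P ∈ S := by
      rintro P ⟨⟨a, b, hab⟩, hspan⟩
      obtain ⟨c, hc, hrep⟩ := exists_rep_mk (Jmap P.rep) (Jmap_ne P.rep_nonzero)
      have hrepc : (cP P).rep = c • Jmap P.rep := by
        rw [cP_eq_mk P]
        exact hrep
      constructor
      · refine ⟨fun i => c * starRingEnd ℂ (a i), fun l => starRingEnd ℂ (b l), ?_⟩
        intro p
        rw [hrepc]
        simp only [Pi.smul_apply, smul_eq_mul, Jmap_apply, hab p, map_mul]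
        ring
      · rw [Set.mem_setOf_eq, hrepc]
        apply Submodule.smul_mem
        rw [Set.mem_setOf_eq, Submodule.mem_span_range_iff_exists_fun] at hspan
        obtain ⟨d, hd⟩ := hspan
        have hJ : Jmap P.rep = ∑ j, (starRingEnd ℂ (d j)) • (fun p => ((w j p : ℝ) : ℂ)) := by
          funext p
          rw [← hd]
          simp only [Jmap_apply, Finset.sum_apply, Pi.smul_apply, smul_eq_mul, map_sum, map_mul,
            Complex.conj_ofReal]
        rw [hJ]
        exact Submodule.sum_mem _ fun j _ =>
          Submodule.smul_mem _ _ (Submodule.subset_span ⟨j, rfl⟩)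
    have hparity := invol_parity S hfin cP hstab (fun P _ => cP_cP P)
    have hfixeq : {P ∈ S | cP P = P} = {P ∈ S | IsRealPointG P} := by
      ext P
      simp only [Set.mem_setOf_eq, cP_fixed_iff]
    constructor
    · rw [hkdef]
      calc {P | P ∈ S ∧ IsRealPointG P}.ncard ≤ S.ncard :=
            Set.ncard_le_ncard (Set.sep_subset _ _) hfin
        _ = n + 1 := hncard
    · rw [hkdef, ← hfixeq, hparity, hncard]
  · -- construction
    rintro ⟨hk, hpar⟩
    set u : Fin (n + 1) → ℂ := fun m => tval k (m : ℕ) with hu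
    have huinj : Function.Injective u := fun m m' h => Fin.val_injective (tval_inj k h)
    refine ⟨fun j => wfunN n k (j : ℕ), ?_, ?_, ?_⟩
    case _ =>
      exact li_real _ u huinj (span_eq hk hpar)
    case _ =>
      rw [show {P : Projectivization ℂ (Fin 2 × Fin (n+1) → ℂ) |
          P.rep ∈ Submodule.span ℂ (Set.range fun j => fun s =>
            ((wfunN n k ((j : Fin (n+1)) : ℕ) s : ℝ) : ℂ))}
          = {P | P.rep ∈ Submodule.span ℂ (Set.range fun m : Fin (n+1) => MvGen n (u m))} by
        rw [span_eq hk hpar]]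
      rw [inter_eq u huinj]
      exact encard_range_F u huinj
    case _ =>
      rw [show {P : Projectivization ℂ (Fin 2 × Fin (n+1) → ℂ) |
          P.rep ∈ Submodule.span ℂ (Set.range fun j => fun s =>
            ((wfunN n k ((j : Fin (n+1)) : ℕ) s : ℝ) : ℂ))}
          = {P | P.rep ∈ Submodule.span ℂ (Set.range fun m : Fin (n+1) => MvGen n (u m))} by
        rw [span_eq hk hpar]]
      rw [inter_eq u huinj]
      have hreal : {P ∈ Set.range (fun m => mk ℂ (MvGen n (u m)) (MvGen_ne _)) | IsRealPointG P}
          = (fun m => mk ℂ (MvGen n (u m)) (MvGen_ne _)) '' {m : Fin (n+1) | (m : ℕ) < k} := by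
        ext Q
        constructor
        · rintro ⟨⟨m, rfl⟩, hQ⟩
          refine ⟨m, ?_, rfl⟩
          by_contra h
          exact notreal_mk h hQ
        · rintro ⟨m, hm, rfl⟩
          exact ⟨⟨m, rfl⟩, real_mk hm⟩
      rw [hreal, Set.ncard_image_of_injective _ (F_inj u huinj), ncard_small hk]
end
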